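/- If X and Y are independent random variables with Borel-Tanner distributions p(·|θ, r) and p(·|θ, s) respectively (same θ), then X + Y has Borel-Tanner distribution p(·|θ, r+s); equivalently, for all integers z ≥ r+s, Σ_{x=r}^{z-s} a_r(x) a_s(z-x) = a_{r+s}(z), where a_k(x) = k x^{x-k-1}/(x-k)!. -/

import Mathlib

/-!
Put `b_n(x) = x (x + n)^(n-1) / n!` (the Abel polynomial divided by `n!`, with `b_0 = 1`), so that
`a_k(k + n) = b_n(k)`. The coefficient identity is the binomial-type property
`b_n(x + y) = ∑_{i+j=n} b_i(x) b_j(y)`, proved by induction on `n`: since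
`b_n'(y) = b_{n-1}(y + 1)`, the induction hypothesis gives both sides the same derivative in `y`,
and they agree at `y = 0` because `b_j(0) = 0` for `j > 0`. The pmf identity follows because
`θ^(x-r) e^(-θx) θ^(z-x-s) e^(-θ(z-x)) = θ^(z-r-s) e^(-θz)` does not depend on `x`.
-/

/-- Borel-Tanner coefficient `a_k(x) = k x^{x-k-1}/(x-k)!`. -/
noncomputable def btCoeff (k x : ℕ) : ℝ :=
  (k : ℝ) * (x : ℝ) ^ ((x : ℤ) - k - 1) / (Nat.factorial (x - k))

/-- Borel-Tanner pmf `p(x|θ,k) = a_k(x) θ^{x-k} e^{-θx}`. -/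
noncomputable def btPmf (k x : ℕ) (θ : ℝ) : ℝ :=
  btCoeff k x * θ ^ (x - k) * Real.exp (-θ * x)

open Finset Nat

noncomputable def scaledAbelPoly : ℕ → ℝ → ℝ
  | 0, _ => 1
  | n + 1, x => x * (x + (n + 1)) ^ n / (n + 1)!

lemma hasDerivAt_scaledAbelPoly_succ (n : ℕ) (y : ℝ) :
    HasDerivAt (scaledAbelPoly (n + 1)) (scaledAbelPoly n (y + 1)) y := by
  have h : HasDerivAt (fun x : ℝ ↦ x * (x + (n + 1)) ^ n / (n + 1)!)
      (((y + (n + 1)) ^ n + y * (n * (y + (n + 1)) ^ (n - 1))) / (n + 1)!) y := by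
    simpa using ((hasDerivAt_id' y).mul
      (((hasDerivAt_id' y).add_const ((n : ℝ) + 1)).pow n)).div_const ((n + 1)! : ℝ)
  refine h.congr_deriv ?_
  cases n with
  | zero => simp [scaledAbelPoly]
  | succ m =>
    simp only [scaledAbelPoly, factorial_succ (m + 1), add_tsub_cancel_right]
    push_cast
    field_simp
    ring

theorem scaledAbelPoly_add (n : ℕ) (x y : ℝ) :
    scaledAbelPoly n (x + y) =
      ∑ p ∈ antidiagonal n, scaledAbelPoly p.1 x * scaledAbelPoly p.2 y := by
  induction n generalizing y with
  | zero => simp [scaledAbelPoly]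
  | succ n ih =>
    have hlhs : ∀ y, HasDerivAt (fun y ↦ scaledAbelPoly (n + 1) (x + y))
        (scaledAbelPoly n (x + y + 1)) y := fun y ↦
      ((hasDerivAt_scaledAbelPoly_succ n (x + y)).comp y
        ((hasDerivAt_id' y).const_add x)).congr_deriv (mul_one _)
    have hrhs : ∀ y, HasDerivAt
        (fun y ↦ ∑ p ∈ antidiagonal (n + 1), scaledAbelPoly p.1 x * scaledAbelPoly p.2 y)
        (scaledAbelPoly n (x + y + 1)) y := by
      intro y
      rw [add_assoc, ih (y + 1)]
      simp only [Nat.sum_antidiagonal_succ']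
      exact (HasDerivAt.fun_sum fun p _ ↦ (hasDerivAt_scaledAbelPoly_succ p.2 y).const_mul
        (scaledAbelPoly p.1 x)).const_add (scaledAbelPoly (n + 1) x * 1)
    have hzero : scaledAbelPoly (n + 1) (x + 0) =
        ∑ p ∈ antidiagonal (n + 1), scaledAbelPoly p.1 x * scaledAbelPoly p.2 0 := by
      simp [Nat.sum_antidiagonal_succ', scaledAbelPoly]
    exact congrFun (eq_of_fderiv_eq (fun y ↦ (hlhs y).differentiableAt)
      (fun y ↦ (hrhs y).differentiableAt)
      (fun y ↦ (hlhs y).hasFDerivAt.fderiv.trans (hrhs y).hasFDerivAt.fderiv.symm) 0 hzero) y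

lemma btCoeff_add_eq_scaledAbelPoly {k : ℕ} (hk : 0 < k) (n : ℕ) :
    btCoeff k (k + n) = scaledAbelPoly n k := by
  cases n with
  | zero =>
    have : (k : ℝ) ≠ 0 := by positivity
    simp [btCoeff, scaledAbelPoly, this]
  | succ m =>
    simp only [btCoeff, scaledAbelPoly, add_tsub_cancel_left]
    rw [show ((k + (m + 1) : ℕ) : ℤ) - k - 1 = (m : ℤ) by push_cast; ring, zpow_natCast]
    push_cast
    ring

theorem sum_btCoeff_mul_btCoeff {r s z : ℕ} (hr : 0 < r) (hs : 0 < s) (hz : r + s ≤ z) :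
    ∑ x ∈ Icc r (z - s), btCoeff r x * btCoeff s (z - x) = btCoeff (r + s) z := by
  obtain ⟨n, rfl⟩ := Nat.exists_eq_add_of_le hz
  have hreindex : ∑ x ∈ Icc r (r + s + n - s), btCoeff r x * btCoeff s (r + s + n - x) =
      ∑ p ∈ antidiagonal n, btCoeff r (r + p.1) * btCoeff s (s + p.2) := by
    refine sum_nbij' (fun x ↦ (x - r, r + n - x)) (fun p ↦ r + p.1) ?_ ?_ ?_ ?_ ?_ <;>
      simp only [mem_Icc, HasAntidiagonal.mem_antidiagonal] <;> intros <;> (try congr 2) <;> omega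
  simp_rw [hreindex, btCoeff_add_eq_scaledAbelPoly hr, btCoeff_add_eq_scaledAbelPoly hs,
    btCoeff_add_eq_scaledAbelPoly (add_pos hr hs), Nat.cast_add, scaledAbelPoly_add]

lemma btPmf_mul_btPmf {r s x z : ℕ} (hrx : r ≤ x) (hxz : x + s ≤ z) (θ : ℝ) :
    btPmf r x θ * btPmf s (z - x) θ =
      btCoeff r x * btCoeff s (z - x) * (θ ^ (z - (r + s)) * Real.exp (-θ * z)) := by
  have hpow : θ ^ (x - r) * θ ^ (z - x - s) = θ ^ (z - (r + s)) := by
    rw [← pow_add]; congr 1; omega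
  have hexp : Real.exp (-θ * x) * Real.exp (-θ * ↑(z - x)) = Real.exp (-θ * z) := by
    rw [← Real.exp_add, Nat.cast_sub (by omega)]; ring_nf
  rw [btPmf, btPmf, ← hpow, ← hexp]
  ring

theorem borel_tanner_convolution_general (r s : ℕ) (hr : 0 < r) (hs : 0 < s)
    (z : ℕ) (hz : r + s ≤ z) (θ : ℝ) :
    (∑ x ∈ Finset.Icc r (z - s), btPmf r x θ * btPmf s (z - x) θ =
      btPmf (r + s) z θ) ∧
    (∑ x ∈ Finset.Icc r (z - s), btCoeff r x * btCoeff s (z - x) =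
      btCoeff (r + s) z) := by
  have hcoeff := sum_btCoeff_mul_btCoeff hr hs hz
  refine ⟨?_, hcoeff⟩
  have hterm : ∀ x ∈ Icc r (z - s), btPmf r x θ * btPmf s (z - x) θ =
      btCoeff r x * btCoeff s (z - x) * (θ ^ (z - (r + s)) * Real.exp (-θ * z)) := fun x hx ↦
    btPmf_mul_btPmf (mem_Icc.1 hx).1 (by have := (mem_Icc.1 hx).2; omega) θ
  rw [sum_congr rfl hterm, ← sum_mul, hcoeff, btPmf, mul_assoc]

/-- The sum of independent Borel-Tanner variables with parameters `(θ,r)` and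
`(θ,s)` is Borel-Tanner `(θ, r+s)`: the pmfs convolve, equivalently
`Σ_{x=r}^{z-s} a_r(x) a_s(z-x) = a_{r+s}(z)` (Abel's identity). -/
theorem borel_tanner_convolution (r s : ℕ) (hr : 0 < r) (hs : 0 < s)
    (z : ℕ) (hz : r + s ≤ z) (θ : ℝ) (hθ0 : 0 < θ) (hθ1 : θ < 1) :
    (∑ x ∈ Finset.Icc r (z - s), btPmf r x θ * btPmf s (z - x) θ =
      btPmf (r + s) z θ) ∧
    (∑ x ∈ Finset.Icc r (z - s), btCoeff r x * btCoeff s (z - x) =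
      btCoeff (r + s) z) :=
  borel_tanner_convolution_general r s hr hs z hz θ
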